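/- Let A ∈ ℂ^{M×N_a} and B ∈ ℂ^{M×N_b} be matrices with unit ℓ²-norm columns, with coherences μ_a and μ_b respectively and mutual coherence μ_m. Let z = A x + B e where x ∈ ℂ^{N_a} with ‖x‖₀ = n_x and e ∈ ℂ^{N_b} with supp(e) = E and ‖e‖₀ = n_e. If μ_m² · 2 n_x n_e < [1 − μ_a(2n_x−1)]_+ · [1 − μ_b(n_e−1)]_+, then x is the unique solution of the constrained ℓ⁰-minimization (P0,E): for every x' ∈ ℂ^{N_a} with ‖x'‖₀ ≤ n_x such that A x' − z lies in the column span of B_E, one has x' = x. -/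

import Mathlib

open scoped BigOperators ComplexConjugate
open Matrix

/-- Coherence of a matrix: max over distinct column pairs of |aₖᴴ aₗ| (0 if fewer than 2 columns). -/
noncomputable def coh {m n : Type*} [Fintype m] [Fintype n] (A : Matrix m n ℂ) : ℝ :=
  ⨆ k, ⨆ l, ⨆ _ : k ≠ l, ‖∑ i, conj (A i k) * A i l‖

/-- Mutual coherence between two matrices: max over column pairs of |aₖᴴ bₗ|. -/
noncomputable def mcoh {m na nb : Type*} [Fintype m] [Fintype na] [Fintype nb]
    (A : Matrix m na ℂ) (B : Matrix m nb ℂ) : ℝ :=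
  ⨆ k, ⨆ l, ‖∑ i, conj (A i k) * B i l‖

/-- All columns have unit ℓ²-norm. -/
def unitCols {m n : Type*} [Fintype m] (A : Matrix m n ℂ) : Prop :=
  ∀ k, ∑ i, ‖A i k‖ ^ 2 = 1

/-- Number of nonzero entries of a vector. -/
noncomputable def l0 {n : Type*} (v : n → ℂ) : ℕ := {i | v i ≠ 0}.ncard

/-- ℓ¹ norm of a vector. -/
noncomputable def l1 {n : Type*} [Fintype n] (v : n → ℂ) : ℝ := ∑ i, ‖v i‖

/-- Squared ℓ² norm of a vector. -/
noncomputable def l2sq {n : Type*} [Fintype n] (v : n → ℂ) : ℝ := ∑ i, ‖v i‖ ^ 2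

/-- Submatrix consisting of the columns with index in `E`. -/
def colsub {m n : Type*} (B : Matrix m n ℂ) (E : Finset n) : Matrix m {j // j ∈ E} ℂ :=
  fun i j => B i j.val

/-- Orthogonal projector onto the orthogonal complement of the column span of `B_E`. -/
noncomputable def projC {m n : Type*} [Fintype m] [DecidableEq m] [DecidableEq n]
    (B : Matrix m n ℂ) (E : Finset n) : Matrix m m ℂ :=
  1 - colsub B E * ((colsub B E)ᴴ * colsub B E)⁻¹ * (colsub B E)ᴴ
lemma gram_expand {M : ℕ} {na nb : Type*} [Fintype na] [Fintype nb]
    (A : Matrix (Fin M) na ℂ) (B : Matrix (Fin M) nb ℂ) (d : na → ℂ) (v : nb → ℂ) :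
    ∑ i, conj (A.mulVec d i) * (B.mulVec v i)
      = ∑ k, ∑ l, conj (d k) * v l * ∑ i, conj (A i k) * B i l := by
  calc ∑ i, conj (A.mulVec d i) * (B.mulVec v i)
      = ∑ i, ∑ l, ∑ k, conj (A i k * d k) * (B i l * v l) := by
        simp only [mulVec, dotProduct, map_sum, Finset.sum_mul, Finset.mul_sum]
    _ = ∑ i, ∑ k, ∑ l, conj (A i k * d k) * (B i l * v l) :=
        Finset.sum_congr rfl fun i _ => Finset.sum_comm
    _ = ∑ k, ∑ i, ∑ l, conj (A i k * d k) * (B i l * v l) := Finset.sum_comm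
    _ = ∑ k, ∑ l, ∑ i, conj (A i k * d k) * (B i l * v l) :=
        Finset.sum_congr rfl fun k _ => Finset.sum_comm
    _ = ∑ k, ∑ l, conj (d k) * v l * ∑ i, conj (A i k) * B i l := by
        refine Finset.sum_congr rfl fun k _ => Finset.sum_congr rfl fun l _ => ?_
        rw [Finset.mul_sum]
        refine Finset.sum_congr rfl fun i _ => ?_
        rw [RingHom.map_mul]; ring

lemma l2sq_cast {M : ℕ} (w : Fin M → ℂ) :
    (↑(∑ i, ‖w i‖ ^ 2) : ℂ) = ∑ i, conj (w i) * w i := by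
  push_cast
  refine Finset.sum_congr rfl fun i _ => ?_
  rw [Complex.conj_mul']

lemma coh_nonneg {m n : Type*} [Fintype m] [Fintype n] (A : Matrix m n ℂ) : 0 ≤ coh A := by
  refine Real.iSup_nonneg fun k => Real.iSup_nonneg fun l => ?_
  by_cases h : k = l
  · subst h
    have : IsEmpty (k ≠ k) := ⟨fun h => h rfl⟩
    rw [iSup_of_empty', Real.sSup_empty]
  · have : Nonempty (k ≠ l) := ⟨h⟩
    rw [ciSup_const]
    positivity

lemma coh_bound {m n : Type*} [Fintype m] [Fintype n] (A : Matrix m n ℂ) {k l : n}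
    (h : k ≠ l) : ‖∑ i, conj (A i k) * A i l‖ ≤ coh A := by
  have hn : Nonempty (k ≠ l) := ⟨h⟩
  calc ‖∑ i, conj (A i k) * A i l‖
      = ⨆ _ : k ≠ l, ‖∑ i, conj (A i k) * A i l‖ := ciSup_const.symm
    _ ≤ ⨆ l', ⨆ _ : k ≠ l', ‖∑ i, conj (A i k) * A i l'‖ :=
        le_ciSup (Set.Finite.bddAbove (Set.finite_range
          (fun l' => ⨆ _ : k ≠ l', ‖∑ i, conj (A i k) * A i l'‖))) l
    _ ≤ coh A :=
        le_ciSup (Set.Finite.bddAbove (Set.finite_range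
          (fun k => ⨆ l', ⨆ _ : k ≠ l', ‖∑ i, conj (A i k) * A i l'‖))) k

lemma mcoh_bound {m na nb : Type*} [Fintype m] [Fintype na] [Fintype nb]
    (A : Matrix m na ℂ) (B : Matrix m nb ℂ) (k : na) (l : nb) :
    ‖∑ i, conj (A i k) * B i l‖ ≤ mcoh A B := by
  calc ‖∑ i, conj (A i k) * B i l‖
      ≤ ⨆ l', ‖∑ i, conj (A i k) * B i l'‖ :=
        le_ciSup (Set.Finite.bddAbove (Set.finite_range
          (fun l' => ‖∑ i, conj (A i k) * B i l'‖))) l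
    _ ≤ mcoh A B :=
        le_ciSup (Set.Finite.bddAbove (Set.finite_range
          (fun k => ⨆ l', ‖∑ i, conj (A i k) * B i l'‖))) k

lemma l2sq_cast' {n : Type*} [Fintype n] (w : n → ℂ) :
    (↑(∑ i, ‖w i‖ ^ 2) : ℂ) = ∑ i, conj (w i) * w i := by
  push_cast
  refine Finset.sum_congr rfl fun i _ => ?_
  rw [Complex.conj_mul']

lemma gram_lower {M : ℕ} {n' : Type*} [Fintype n'] [DecidableEq n']
    (C : Matrix (Fin M) n' ℂ) (hunit : ∀ k, ∑ i, ‖C i k‖ ^ 2 = 1) (μ : ℝ)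
    (hμ : ∀ k l, k ≠ l → ‖∑ i, conj (C i k) * C i l‖ ≤ μ) (d : n' → ℂ) :
    (∑ k, ‖d k‖ ^ 2) - μ * ((∑ k, ‖d k‖) ^ 2 - ∑ k, ‖d k‖ ^ 2)
      ≤ ∑ i, ‖C.mulVec d i‖ ^ 2 := by
  classical
  set G : n' → n' → ℂ := fun k l => ∑ i, conj (C i k) * C i l with hG
  have key : (↑(∑ i, ‖C.mulVec d i‖ ^ 2) : ℂ)
      = ↑(∑ k, ‖d k‖ ^ 2) + ∑ k, ∑ l ∈ Finset.univ.erase k, conj (d k) * d l * G k l := by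
    rw [l2sq_cast, gram_expand]
    have hsplit : ∀ k : n', ∑ l, conj (d k) * d l * G k l
        = conj (d k) * d k * G k k + ∑ l ∈ Finset.univ.erase k, conj (d k) * d l * G k l :=
      fun k => (Finset.add_sum_erase _ _ (Finset.mem_univ k)).symm
    simp +zetaDelta only [hsplit]
    rw [Finset.sum_add_distrib]
    congr 1
    have hdiag : ∀ k : n', conj (d k) * d k * G k k = ((‖d k‖ ^ 2 : ℝ) : ℂ) := by
      intro k
      have : G k k = 1 := by
        rw [hG]
        have := l2sq_cast' (fun i => C i k)
        rw [hunit k] at this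
        simpa using this.symm
      rw [this, mul_one, Complex.conj_mul']
      push_cast; ring
    simp +zetaDelta only [hdiag]
    push_cast
    rfl
  have hoff : ‖∑ k, ∑ l ∈ Finset.univ.erase k, conj (d k) * d l * G k l‖
      ≤ μ * ((∑ k, ‖d k‖) ^ 2 - ∑ k, ‖d k‖ ^ 2) := by
    calc ‖∑ k, ∑ l ∈ Finset.univ.erase k, conj (d k) * d l * G k l‖
        ≤ ∑ k, ∑ l ∈ Finset.univ.erase k, ‖d k‖ * ‖d l‖ * μ := by
          refine le_trans (norm_sum_le _ _) (Finset.sum_le_sum fun k _ => ?_)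
          refine le_trans (norm_sum_le _ _) (Finset.sum_le_sum fun l hl => ?_)
          rw [norm_mul, norm_mul, RingHomIsometric.norm_map]
          exact mul_le_mul_of_nonneg_left (hμ k l (Finset.ne_of_mem_erase hl).symm)
            (by positivity)
      _ = μ * ((∑ k, ‖d k‖) ^ 2 - ∑ k, ‖d k‖ ^ 2) := by
          have h1 : ∀ k : n', ∑ l ∈ Finset.univ.erase k, ‖d k‖ * ‖d l‖ * μ
              = (∑ l, ‖d k‖ * ‖d l‖ * μ) - ‖d k‖ * ‖d k‖ * μ :=
            fun k => Finset.sum_erase_eq_sub (Finset.mem_univ k)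
          simp only [h1]
          rw [Finset.sum_sub_distrib]
          have h2 : ∀ k : n', ∑ l, ‖d k‖ * ‖d l‖ * μ = ‖d k‖ * ((∑ l, ‖d l‖) * μ) := by
            intro k
            rw [Finset.sum_mul, Finset.mul_sum]
            exact Finset.sum_congr rfl fun l _ => by ring
          have h2' : (∑ k, ∑ l, ‖d k‖ * ‖d l‖ * μ) = ∑ k, ‖d k‖ * ((∑ l, ‖d l‖) * μ) :=
            Finset.sum_congr rfl fun k _ => h2 k
          rw [h2']
          rw [← Finset.sum_mul]
          have h3 : ∑ k, ‖d k‖ * ‖d k‖ * μ = (∑ k, ‖d k‖ ^ 2) * μ := by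
            rw [Finset.sum_mul]
            exact Finset.sum_congr rfl fun k _ => by ring
          rw [h3]; ring
  have habs : |(∑ i, ‖C.mulVec d i‖ ^ 2) - ∑ k, ‖d k‖ ^ 2|
      ≤ μ * ((∑ k, ‖d k‖) ^ 2 - ∑ k, ‖d k‖ ^ 2) := by
    have : ((((∑ i, ‖C.mulVec d i‖ ^ 2) - ∑ k, ‖d k‖ ^ 2 : ℝ)) : ℂ)
        = ∑ k, ∑ l ∈ Finset.univ.erase k, conj (d k) * d l * G k l := by
      push_cast
      rw [sub_eq_iff_eq_add']
      exact_mod_cast key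
    calc |(∑ i, ‖C.mulVec d i‖ ^ 2) - ∑ k, ‖d k‖ ^ 2|
        = ‖((((∑ i, ‖C.mulVec d i‖ ^ 2) - ∑ k, ‖d k‖ ^ 2 : ℝ)) : ℂ)‖ := by
          rw [Complex.norm_real, Real.norm_eq_abs]
      _ ≤ _ := by rw [this]; exact hoff
  have := abs_le.mp habs
  linarith [this.1]

lemma cross_bound {M : ℕ} {na nb : Type*} [Fintype na] [Fintype nb]
    (A : Matrix (Fin M) na ℂ) (Bm : Matrix (Fin M) nb ℂ) (μ : ℝ)
    (hμ : ∀ k l, ‖∑ i, conj (A i k) * Bm i l‖ ≤ μ)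
    (d : na → ℂ) (v : nb → ℂ) (hw : A.mulVec d = Bm.mulVec v) :
    ∑ i, ‖A.mulVec d i‖ ^ 2 ≤ μ * ((∑ k, ‖d k‖) * (∑ l, ‖v l‖)) := by
  have h0 : ∑ i, conj (A.mulVec d i) * (A.mulVec d i)
      = ∑ i, conj (A.mulVec d i) * (Bm.mulVec v i) := by rw [hw]
  have hc : (↑(∑ i, ‖A.mulVec d i‖ ^ 2) : ℂ)
      = ∑ k, ∑ l, conj (d k) * v l * ∑ i, conj (A i k) * Bm i l := by
    rw [l2sq_cast, h0, gram_expand]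
  calc ∑ i, ‖A.mulVec d i‖ ^ 2
      = ‖(↑(∑ i, ‖A.mulVec d i‖ ^ 2) : ℂ)‖ := by
        rw [Complex.norm_real, Real.norm_of_nonneg (by positivity)]
    _ = ‖∑ k, ∑ l, conj (d k) * v l * ∑ i, conj (A i k) * Bm i l‖ := by rw [hc]
    _ ≤ ∑ k, ∑ l, ‖d k‖ * ‖v l‖ * μ := by
        refine le_trans (norm_sum_le _ _) (Finset.sum_le_sum fun k _ => ?_)
        refine le_trans (norm_sum_le _ _) (Finset.sum_le_sum fun l _ => ?_)
        rw [norm_mul, norm_mul, RingHomIsometric.norm_map]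
        exact mul_le_mul_of_nonneg_left (hμ k l) (by positivity)
    _ = μ * ((∑ k, ‖d k‖) * (∑ l, ‖v l‖)) := by
        rw [Finset.sum_mul_sum]
        rw [Finset.mul_sum]
        refine Finset.sum_congr rfl fun k _ => ?_
        rw [Finset.mul_sum]
        exact Finset.sum_congr rfl fun l _ => by ring

lemma l1_sq_le {n : Type*} [Fintype n] (d : n → ℂ) (s : Finset n)
    (hs : ∀ k, k ∉ s → d k = 0) :
    (∑ k, ‖d k‖) ^ 2 ≤ s.card * ∑ k, ‖d k‖ ^ 2 := by
  have h1 : ∑ k, ‖d k‖ = ∑ k ∈ s, ‖d k‖ :=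
    (Finset.sum_subset (Finset.subset_univ s) (fun k _ hk => by rw [hs k hk]; simp)).symm
  have h2 : ∑ k, ‖d k‖ ^ 2 = ∑ k ∈ s, ‖d k‖ ^ 2 :=
    (Finset.sum_subset (Finset.subset_univ s) (fun k _ hk => by rw [hs k hk]; simp)).symm
  rw [h1, h2]
  have h := Finset.sum_mul_sq_le_sq_mul_sq s (fun _ => 1) (fun k => ‖d k‖)
  simpa using h

set_option maxHeartbeats 2000000 in
/-- Theorem 3, ℓ⁰ part: x is the unique solution of (P0,E). -/
theorem P0E_unique_solution
    {M Na Nb : ℕ} (A : Matrix (Fin M) (Fin Na) ℂ) (B : Matrix (Fin M) (Fin Nb) ℂ)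
    (hA : unitCols A) (hB : unitCols B)
    (μa μb μm : ℝ) (hμa : μa = coh A) (hμb : μb = coh B) (hμm : μm = mcoh A B)
    (x : Fin Na → ℂ) (e : Fin Nb → ℂ) (E : Finset (Fin Nb))
    (hE : Function.support e = ↑E)
    (nx ne : ℕ) (hnx : l0 x = nx) (hne : l0 e = ne)
    (z : Fin M → ℂ) (hz : z = A.mulVec x + B.mulVec e)
    (hcond : μm ^ 2 * (2 * nx * ne) <
      max (1 - μa * (2 * (nx : ℝ) - 1)) 0 * max (1 - μb * ((ne : ℝ) - 1)) 0) :
    ∀ x' : Fin Na → ℂ, l0 x' ≤ nx →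
      (∃ u : {j // j ∈ E} → ℂ, A.mulVec x' - z = (colsub B E).mulVec u) →
      x' = x := by
  classical
  rintro x' hx' ⟨u, hu⟩
  by_contra hxx
  set C : Matrix (Fin M) {j // j ∈ E} ℂ := colsub B E with hCdef
  set d : Fin Na → ℂ := fun k => x' k - x k with hd
  set v : {j // j ∈ E} → ℂ := fun j => u j + e j.val with hv
  have he0 : ∀ l, l ∉ E → e l = 0 := by
    intro l hl
    by_contra h
    exact hl (by rw [← Finset.mem_coe, ← hE]; exact h)
  have hBe : B.mulVec e = C.mulVec (fun j => e j.val) := by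
    funext i
    show ∑ l, B i l * e l = ∑ j : {j // j ∈ E}, C i j * e j.val
    calc ∑ l, B i l * e l
        = ∑ l ∈ E, B i l * e l :=
          (Finset.sum_subset (Finset.subset_univ E)
            (fun l _ hl => by rw [he0 l hl, mul_zero])).symm
      _ = ∑ j : {j // j ∈ E}, B i j.val * e j.val := (Finset.sum_coe_sort E _).symm
      _ = ∑ j : {j // j ∈ E}, C i j * e j.val := rfl
  have hw : A.mulVec d = C.mulVec v := by
    have h1 : A.mulVec d = A.mulVec x' - A.mulVec x := by
      have : d = x' - x := rfl
      rw [this, Matrix.mulVec_sub]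
    have h2 : A.mulVec x' - A.mulVec x = (A.mulVec x' - z) + B.mulVec e := by
      rw [hz]; abel
    have h3 : v = u + fun j => e j.val := rfl
    rw [h1, h2, hu, hBe, h3, Matrix.mulVec_add]
  have hk0 : ∃ k, d k ≠ 0 := by
    by_contra h
    push_neg at h
    exact hxx (funext fun k => by have := h k; rwa [hd, sub_eq_zero] at this)
  obtain ⟨k0, hk0⟩ := hk0
  have hld : l0 d ≤ 2 * nx := by
    have hsub : {k | d k ≠ 0} ⊆ {k | x' k ≠ 0} ∪ {k | x k ≠ 0} := by
      intro k hk
      by_contra h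
      simp only [Set.mem_union, Set.mem_setOf_eq, not_or, not_not] at h
      exact hk (by rw [hd]; simp [h.1, h.2])
    calc l0 d ≤ ({k | x' k ≠ 0} ∪ {k | x k ≠ 0}).ncard :=
          Set.ncard_le_ncard hsub (Set.toFinite _)
      _ ≤ {k | x' k ≠ 0}.ncard + {k | x k ≠ 0}.ncard := Set.ncard_union_le _ _
      _ ≤ nx + nx := add_le_add hx' (le_of_eq hnx)
      _ = 2 * nx := by ring
  set Sd : Finset (Fin Na) := Finset.univ.filter (fun k => d k ≠ 0) with hSd
  have hSdcard : Sd.card = l0 d := by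
    have hset : {k | d k ≠ 0} = ↑Sd := by ext k; simp [hSd]
    rw [l0, hset, Set.ncard_coe_finset]
  have hEcard : E.card = ne := by
    have hset : {i | e i ≠ 0} = ↑E := hE
    rw [← hne, l0, hset, Set.ncard_coe_finset]
  have μa0 : 0 ≤ μa := hμa ▸ coh_nonneg A
  have μb0 : 0 ≤ μb := hμb ▸ coh_nonneg B
  have h1 := gram_lower A hA μa (fun k l h => hμa ▸ coh_bound A h) d
  have hCunit : ∀ j : {j // j ∈ E}, ∑ i, ‖C i j‖ ^ 2 = 1 := fun j => hB j.val
  have hCcoh : ∀ j j' : {j // j ∈ E}, j ≠ j' → ‖∑ i, conj (C i j) * C i j'‖ ≤ μb :=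
    fun j j' h => hμb ▸ coh_bound B (fun hvv => h (Subtype.ext hvv))
  have h2 := gram_lower C hCunit μb hCcoh v
  have h3 := cross_bound A C μm (fun k j => hμm ▸ mcoh_bound A B k j.val) d v hw
  rw [← hw] at h2
  have h4 : (∑ k, ‖d k‖) ^ 2 ≤ (2 * nx : ℝ) * ∑ k, ‖d k‖ ^ 2 := by
    have hcs := l1_sq_le d Sd (fun k hk => by
      by_contra h
      exact hk (by simp [hSd, h]))
    have hc : (Sd.card : ℝ) ≤ 2 * (nx : ℝ) := by
      have : Sd.card ≤ 2 * nx := hSdcard ▸ hld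
      exact_mod_cast this
    have hl2 : (0:ℝ) ≤ ∑ k, ‖d k‖ ^ 2 := by positivity
    linarith [hcs, mul_le_mul_of_nonneg_right hc hl2]
  have h5 : (∑ j, ‖v j‖) ^ 2 ≤ (ne : ℝ) * ∑ j, ‖v j‖ ^ 2 := by
    have hcs := l1_sq_le v Finset.univ (fun k hk => absurd (Finset.mem_univ k) hk)
    have hcard : (Finset.univ : Finset {j // j ∈ E}).card = ne := by
      rw [Finset.card_univ, Fintype.card_coe, hEcard]
    rw [hcard] at hcs
    exact hcs
  have hldpos : (0:ℝ) < ∑ k, ‖d k‖ ^ 2 := by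
    have hle : ‖d k0‖ ^ 2 ≤ ∑ k, ‖d k‖ ^ 2 :=
      Finset.single_le_sum (f := fun k => ‖d k‖ ^ 2)
        (fun k _ => by positivity) (Finset.mem_univ k0)
    have : (0:ℝ) < ‖d k0‖ ^ 2 := by
      have : (0:ℝ) < ‖d k0‖ := norm_pos_iff.mpr hk0
      positivity
    linarith
  have hR0 : (0:ℝ) ≤ μm ^ 2 * (2 * nx * ne) := by positivity
  have hprodpos : (0:ℝ) < max (1 - μa * (2 * (nx : ℝ) - 1)) 0
      * max (1 - μb * ((ne : ℝ) - 1)) 0 := lt_of_le_of_lt hR0 hcond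
  have hca : (0:ℝ) < 1 - μa * (2 * (nx : ℝ) - 1) := by
    by_contra hc
    push_neg at hc
    rw [max_eq_right hc, zero_mul] at hprodpos
    exact lt_irrefl 0 hprodpos
  have hcb : (0:ℝ) < 1 - μb * ((ne : ℝ) - 1) := by
    by_contra hc
    push_neg at hc
    rw [max_eq_right hc, mul_zero] at hprodpos
    exact lt_irrefl 0 hprodpos
  rw [max_eq_left hca.le, max_eq_left hcb.le] at hcond
  have hP0 : (0:ℝ) ≤ ∑ i, ‖(A.mulVec d) i‖ ^ 2 := by positivity
  have h1' : (1 - μa * (2 * (nx : ℝ) - 1)) * (∑ k, ‖d k‖ ^ 2)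
      ≤ ∑ i, ‖(A.mulVec d) i‖ ^ 2 := by
    linarith [mul_le_mul_of_nonneg_left h4 μa0, h1]
  have h2' : (1 - μb * ((ne : ℝ) - 1)) * (∑ j, ‖v j‖ ^ 2)
      ≤ ∑ i, ‖(A.mulVec d) i‖ ^ 2 := by
    linarith [mul_le_mul_of_nonneg_left h5 μb0, h2]
  have hPpos : (0:ℝ) < ∑ i, ‖(A.mulVec d) i‖ ^ 2 :=
    lt_of_lt_of_le (mul_pos hca hldpos) h1'
  have hl1v0 : (0:ℝ) ≤ ∑ j, ‖v j‖ := by positivity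
  have hl1d0 : (0:ℝ) ≤ ∑ k, ‖d k‖ := by positivity
  have hl2v0 : (0:ℝ) ≤ ∑ j, ‖v j‖ ^ 2 := by positivity
  have hlvpos : (0:ℝ) < ∑ j, ‖v j‖ ^ 2 := by
    rcases lt_or_eq_of_le hl2v0 with h | h
    · exact h
    · exfalso
      have h6 : (∑ j, ‖v j‖) ^ 2 ≤ 0 := by rw [← h, mul_zero] at h5; exact h5
      have hv0 : ∑ j, ‖v j‖ = 0 := le_antisymm (by nlinarith [h6, hl1v0]) hl1v0
      rw [hv0, mul_zero, mul_zero] at h3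
      linarith
  -- final contradiction
  have hmul : ((∑ k, ‖d k‖) ^ 2) * ((∑ j, ‖v j‖) ^ 2)
      ≤ ((2 * nx : ℝ) * (∑ k, ‖d k‖ ^ 2)) * ((ne : ℝ) * ∑ j, ‖v j‖ ^ 2) :=
    mul_le_mul h4 h5 (by positivity) (by positivity)
  have key1 : (∑ i, ‖(A.mulVec d) i‖ ^ 2) ^ 2
      ≤ μm ^ 2 * (((2 * nx : ℝ) * (∑ k, ‖d k‖ ^ 2)) * ((ne : ℝ) * ∑ j, ‖v j‖ ^ 2)) :=
    calc (∑ i, ‖(A.mulVec d) i‖ ^ 2) ^ 2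
        ≤ (μm * ((∑ k, ‖d k‖) * ∑ j, ‖v j‖)) ^ 2 := pow_le_pow_left₀ hP0 h3 2
      _ = μm ^ 2 * (((∑ k, ‖d k‖) ^ 2) * ((∑ j, ‖v j‖) ^ 2)) := by ring
      _ ≤ _ := mul_le_mul_of_nonneg_left hmul (sq_nonneg μm)
  have key2 : ((1 - μa * (2 * (nx : ℝ) - 1)) * (∑ k, ‖d k‖ ^ 2))
      * ((1 - μb * ((ne : ℝ) - 1)) * ∑ j, ‖v j‖ ^ 2)
      ≤ (∑ i, ‖(A.mulVec d) i‖ ^ 2) ^ 2 := by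
    rw [sq]
    exact mul_le_mul h1' h2' (mul_nonneg hcb.le hl2v0) hP0
  have hfin := mul_lt_mul_of_pos_right hcond
    (mul_pos hldpos hlvpos)
  nlinarith [key1, key2, hfin]
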